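/- Let Z be a compact metric space. Then the set B = {μ ∈ M(Z) : ‖μ‖_TV ≤ 1} is compact with respect to the Kantorovich–Rubinstein norm ‖·‖_KRu, i.e. every sequence in B has a subsequence converging in ‖·‖_KRu to an element of B. -/

import Mathlib

open MeasureTheory Filter Topology
open scoped ENNReal NNReal

noncomputable section
attribute [local instance] Classical.propDecidable

variable {Z : Type*} [MetricSpace Z] [MeasurableSpace Z] [BorelSpace Z]

/-- Integral `∫ f dμ` of a function against a finite signed measure, via Jordan decomposition. -/
def sInteg (μ : SignedMeasure Z) (f : Z → ℝ) : ℝ :=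
  (∫ z, f z ∂μ.toJordanDecomposition.posPart) - ∫ z, f z ∂μ.toJordanDecomposition.negPart

/-- Total variation norm `‖μ‖_TV`. -/
def tvNorm (μ : SignedMeasure Z) : ℝ := (μ.totalVariation Set.univ).toReal

/-- The unbalanced Kantorovich–Rubinstein norm
`‖μ‖_KRu = |μ(Z)| + sup { ∫ f dμ : f(e) = 0, Lip(f) ≤ 1 }`. -/
def kruNorm (e : Z) (μ : SignedMeasure Z) : ℝ :=
  |μ Set.univ| +
    sSup {r : ℝ | ∃ f : Z → ℝ, f e = 0 ∧ LipschitzWith 1 f ∧ r = sInteg μ f}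

/-- The balanced Kantorovich–Rubinstein norm `‖μ‖_KR = sup { ∫ f dμ : f(e) = 0, Lip(f) ≤ 1 }`. -/
def krNorm (e : Z) (μ : SignedMeasure Z) : ℝ :=
  sSup {r : ℝ | ∃ f : Z → ℝ, f e = 0 ∧ LipschitzWith 1 f ∧ r = sInteg μ f}

/-- `μ ∈ M_1(Z)`: finite first moment, `∫ d(z,e) d|μ| < ∞`. -/
def MemM1 (e : Z) (μ : SignedMeasure Z) : Prop :=
  (∫⁻ z, ENNReal.ofReal (dist z e) ∂μ.totalVariation) < ⊤

/-- `μ ∈ M_p(Z)`: finite `p`-th moment, `∫ d(z,e)^p d|μ| < ∞`. -/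
def MemMp (e : Z) (p : ℝ) (μ : SignedMeasure Z) : Prop :=
  (∫⁻ z, ENNReal.ofReal (dist z e ^ p) ∂μ.totalVariation) < ⊤

/-- `∫ (1 + d(z,e)^p) d|μ|` as an extended nonnegative real number. -/
def momLint (e : Z) (p : ℝ) (μ : SignedMeasure Z) : ℝ≥0∞ :=
  ∫⁻ z, ENNReal.ofReal (1 + dist z e ^ p) ∂μ.totalVariation

/-- Dirac measure at a point, as a signed measure. -/
def diracSM (x : Z) : SignedMeasure Z := (Measure.dirac x).toSignedMeasure

/-- The regularizer `G_{α,β}(μ) = α‖μ‖_KRu + β ∫ (1 + d(z,e)^p) d|μ|` if `μ ∈ M_p(Z)`,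
and `+∞` otherwise, as an extended real number. -/
def Gab (e : Z) (p α β : ℝ) (μ : SignedMeasure Z) : EReal :=
  if MemMp e p μ then ((α * kruNorm e μ + β * (momLint e p μ).toReal : ℝ) : EReal) else ⊤

/-- A geodesic metric space: any two points are joined by points realizing all
intermediate distance proportions. -/
def IsGeodesic (Z : Type*) [MetricSpace Z] : Prop :=
  ∀ x y : Z, ∀ t : ℝ, 0 ≤ t → t ≤ 1 →
    ∃ z : Z, dist x z = t * dist x y ∧ dist z y = (1 - t) * dist x y

set_option linter.unusedSectionVars false

open BoundedContinuousFunction TopologicalSpace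

/-!
The Jordan parts of the `μ n` are finite measures of mass at most one, so by Prokhorov's theorem
on the compact space `Z` both converge weakly along a common subsequence. Integration against a
measure of mass at most one is `1`-Lipschitz in the test function, so weak convergence is uniform
on every norm-compact set of bounded continuous test functions. By Arzelà–Ascoli the constant `1`
and the `1`-Lipschitz functions vanishing at `e` form such a set, and uniform convergence on it is
exactly convergence in `‖·‖_KRu`.
-/

theorem EquicontinuousOn.tendstoUniformlyOn_of_tendsto {ι X α : Type*} [TopologicalSpace X]
    [UniformSpace α] {Φ : ι → X → α} {Ψ : X → α} {l : Filter ι} {s : Set X}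
    (hΦ : EquicontinuousOn Φ s) (hs : IsCompact s) (h : ∀ x ∈ s, Tendsto (Φ · x) l (𝓝 (Ψ x))) :
    TendstoUniformlyOn Φ Ψ l s := by
  have := isCompact_iff_compactSpace.mp hs
  rw [tendstoUniformlyOn_iff_tendstoUniformly_comp_coe]
  exact UniformFun.tendsto_iff_tendstoUniformly.1 <|
    ((equicontinuous_restrict_iff _).2 hΦ).tendsto_uniformFun_iff_pi _ _ |>.2
      (tendsto_pi_nhds.2 fun x => h x x.2)

namespace MeasureTheory.FiniteMeasure

theorem coe_mass {X : Type*} [MeasurableSpace X] (μ : FiniteMeasure X) :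
    (μ.mass : ℝ) = (μ : Measure X).real Set.univ := by
  rw [measureReal_def, ← ennreal_mass, ENNReal.coe_toReal]

variable {X : Type*} [TopologicalSpace X] [MeasurableSpace X] [OpensMeasurableSpace X]

theorem lipschitzWith_integral (μ : FiniteMeasure X) :
    LipschitzWith μ.mass fun f : X →ᵇ ℝ => ∫ x, f x ∂(μ : Measure X) := by
  refine LipschitzWith.of_dist_le_mul fun f g => ?_
  rw [Real.dist_eq, ← integral_sub (f.integrable _) (g.integrable _), dist_eq_norm]
  exact ((f - g).norm_integral_le_mul_norm (μ : Measure X)).trans_eq (by rw [coe_mass])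

theorem tendstoUniformlyOn_integral {ι : Type*} {l : Filter ι} {μs : ι → FiniteMeasure X}
    {μ : FiniteMeasure X} {C : ℝ≥0} (hC : ∀ i, (μs i).mass ≤ C) (hμ : Tendsto μs l (𝓝 μ))
    {s : Set (X →ᵇ ℝ)} (hs : IsCompact s) :
    TendstoUniformlyOn (fun i (f : X →ᵇ ℝ) => ∫ x, f x ∂(μs i : Measure X))
      (fun f => ∫ x, f x ∂(μ : Measure X)) l s :=
  (LipschitzWith.uniformEquicontinuous _ C fun i => (lipschitzWith_integral (μs i)).weaken (hC i)
    ).equicontinuous.equicontinuousOn s |>.tendstoUniformlyOn_of_tendsto hs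
    fun f _ => tendsto_iff_forall_integral_tendsto.1 hμ f

theorem exists_subseq_tendsto_of_mass_le [CompactSpace X] [MetrizableSpace X] [BorelSpace X]
    [Nonempty X] {C : ℝ≥0} {μs : ℕ → FiniteMeasure X}
    (hC : ∀ n, (μs n).mass ≤ C) :
    ∃ (μ : FiniteMeasure X) (φ : ℕ → ℕ), StrictMono φ ∧ Tendsto (μs ∘ φ) atTop (𝓝 μ) := by
  -- Extracting subsequences needs metrizability, which is available for probability measures:
  -- pass to `(mass, normalize)` in the compact metrizable space `ℝ≥0 × ProbabilityMeasure X`.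
  obtain ⟨⟨m, P⟩, -, φ, hφ, hlim⟩ := (isCompact_Icc.prod isCompact_univ).tendsto_subseq
    (x := fun n => ((μs n).mass, (μs n).normalize)) fun n => ⟨⟨zero_le, hC n⟩, trivial⟩
  have hcont : Continuous fun p : ℝ≥0 × ProbabilityMeasure X => p.1 • p.2.toFiniteMeasure :=
    continuous_fst.smul (ProbabilityMeasure.toFiniteMeasure_continuous.comp continuous_snd)
  have hμ : Tendsto (μs ∘ φ) atTop (𝓝 (m • P.toFiniteMeasure)) := by
    convert (hcont.tendsto _).comp hlim using 1
    ext1 n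
    exact (μs (φ n)).self_eq_mass_smul_normalize
  exact ⟨_, φ, hφ, hμ⟩

end MeasureTheory.FiniteMeasure

theorem BoundedContinuousFunction.isCompact_closure_setOf_lipschitzWith {X : Type*}
    [PseudoMetricSpace X] [CompactSpace X] (x₀ : X) (K : ℝ≥0) :
    IsCompact (closure {f : X →ᵇ ℝ | f x₀ = 0 ∧ LipschitzWith K f}) := by
  refine arzela_ascoli (Metric.closedBall 0 (K * Metric.diam (Set.univ : Set X)))
    (isCompact_closedBall _ _) _ (fun f x hf => ?_) ?_
  · rw [mem_closedBall_zero_iff, Real.norm_eq_abs, ← sub_zero (f x), ← hf.1, ← Real.dist_eq]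
    exact (hf.2.dist_le_mul x x₀).trans <| by
      gcongr
      exact Metric.dist_le_diam_of_mem isCompact_univ.isBounded trivial trivial
  · exact (LipschitzWith.uniformEquicontinuous _ K fun f => f.2.2).equicontinuous

namespace MeasureTheory.Measure

variable {α : Type*} {mα : MeasurableSpace α}

theorem sub_add_eq_add_sub_rev (a b : Measure α) [IsFiniteMeasure a] [IsFiniteMeasure b] :
    a - b + b = a + (b - a) := by
  rw [← toSignedMeasure_eq_toSignedMeasure_iff, toSignedMeasure_add, toSignedMeasure_add,
    ← sub_eq_sub_iff_add_eq_add, ← sub_toSignedMeasure_eq_toSignedMeasure_sub]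

end MeasureTheory.Measure

theorem sInteg_toSignedMeasure_sub (a b : Measure Z) [IsFiniteMeasure a] [IsFiniteMeasure b]
    (f : Z →ᵇ ℝ) :
    sInteg (a.toSignedMeasure - b.toSignedMeasure) f = ∫ z, f z ∂a - ∫ z, f z ∂b := by
  have h := congrArg (fun m => ∫ z, f z ∂m) (a.sub_add_eq_add_sub_rev b)
  simp only [integral_add_measure (f.integrable _) (f.integrable _)] at h
  rw [sInteg, Measure.toJordanDecomposition_toSignedMeasure_sub,
    Measure.jordanDecompositionOfToSignedMeasureSub_posPart,
    Measure.jordanDecompositionOfToSignedMeasureSub_negPart]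
  linarith

theorem sInteg_sub (μ ν : SignedMeasure Z) (f : Z →ᵇ ℝ) :
    sInteg (μ - ν) f = sInteg μ f - sInteg ν f := by
  have h : μ - ν =
      (μ.toJordanDecomposition.posPart + ν.toJordanDecomposition.negPart).toSignedMeasure -
        (μ.toJordanDecomposition.negPart + ν.toJordanDecomposition.posPart).toSignedMeasure := by
    conv_lhs => rw [← μ.toSignedMeasure_toJordanDecomposition,
      ← ν.toSignedMeasure_toJordanDecomposition]
    simp only [JordanDecomposition.toSignedMeasure, Measure.toSignedMeasure_add]
    abel
  rw [h, sInteg_toSignedMeasure_sub, integral_add_measure (f.integrable _) (f.integrable _),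
    integral_add_measure (f.integrable _) (f.integrable _), sInteg, sInteg]
  ring

theorem sInteg_one (μ : SignedMeasure Z) : sInteg μ (fun _ => 1) = μ Set.univ := by
  simp [sInteg, μ.apply_eq_posPart_real_sub_negPart_real MeasurableSet.univ]

theorem tvNorm_eq (μ : SignedMeasure Z) :
    tvNorm μ = μ.toJordanDecomposition.posPart.real Set.univ +
      μ.toJordanDecomposition.negPart.real Set.univ := by
  rw [tvNorm, SignedMeasure.totalVariation, ← measureReal_def, measureReal_add_apply]

theorem tvNorm_toSignedMeasure_sub_le (a b : Measure Z) [IsFiniteMeasure a] [IsFiniteMeasure b] :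
    tvNorm (a.toSignedMeasure - b.toSignedMeasure) ≤ a.real Set.univ + b.real Set.univ := by
  rw [tvNorm_eq, Measure.toJordanDecomposition_toSignedMeasure_sub,
    Measure.jordanDecompositionOfToSignedMeasureSub_posPart,
    Measure.jordanDecompositionOfToSignedMeasureSub_negPart]
  exact add_le_add (ENNReal.toReal_mono (measure_ne_top _ _) (Measure.sub_le _))
    (ENNReal.toReal_mono (measure_ne_top _ _) (Measure.sub_le _))

theorem kruNorm_eq (e : Z) (μ : SignedMeasure Z) : kruNorm e μ = |μ Set.univ| + krNorm e μ := rfl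

theorem zero_mem_krNorm_set (e : Z) (μ : SignedMeasure Z) :
    (0 : ℝ) ∈ {r : ℝ | ∃ f : Z → ℝ, f e = 0 ∧ LipschitzWith 1 f ∧ r = sInteg μ f} :=
  ⟨fun _ => 0, rfl, LipschitzWith.const' 0, by simp [sInteg]⟩

theorem krNorm_nonneg (e : Z) (μ : SignedMeasure Z) : 0 ≤ krNorm e μ := by
  by_cases hbdd : BddAbove {r : ℝ | ∃ f : Z → ℝ, f e = 0 ∧ LipschitzWith 1 f ∧ r = sInteg μ f}
  · exact le_csSup hbdd (zero_mem_krNorm_set e μ)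
  · exact (Real.sSup_of_not_bddAbove hbdd).ge

theorem krNorm_le {e : Z} {μ : SignedMeasure Z} {b : ℝ}
    (hb : ∀ f : Z → ℝ, f e = 0 → LipschitzWith 1 f → sInteg μ f ≤ b) : krNorm e μ ≤ b :=
  csSup_le ⟨0, zero_mem_krNorm_set e μ⟩ fun _ ⟨f, hfe, hf, hr⟩ => hr ▸ hb f hfe hf

theorem tendsto_kruNorm_sub_of_tendstoUniformlyOn [CompactSpace Z] (e : Z) {ι : Type*}
    {l : Filter ι} {μ : ι → SignedMeasure Z} {ν : SignedMeasure Z}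
    (h : TendstoUniformlyOn (fun i (f : Z →ᵇ ℝ) => sInteg (μ i) f) (fun f => sInteg ν f) l
      (insert 1 {f | f e = 0 ∧ LipschitzWith 1 f})) :
    Tendsto (fun i => kruNorm e (μ i - ν)) l (𝓝 0) := by
  refine tendsto_order.2 ⟨fun a ha => Eventually.of_forall fun i => ha.trans_le ?_, fun a ha => ?_⟩
  · exact add_nonneg (abs_nonneg _) (krNorm_nonneg e _)
  filter_upwards [Metric.tendstoUniformlyOn_iff.1 h (a / 3) (by positivity)] with i hi
  have hsmall : ∀ f ∈ insert 1 {f : Z →ᵇ ℝ | f e = 0 ∧ LipschitzWith 1 f},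
      |sInteg (μ i - ν) f| < a / 3 := fun f hf => by
    rw [sInteg_sub, abs_sub_comm, ← Real.dist_eq]
    exact hi f hf
  have hmass : |(μ i - ν) Set.univ| < a / 3 := by
    rw [← sInteg_one]
    exact hsmall 1 (Set.mem_insert _ _)
  have hkr : krNorm e (μ i - ν) ≤ a / 3 := krNorm_le fun f hfe hf =>
    (le_abs_self _).trans (hsmall (mkOfCompact ⟨f, hf.continuous⟩) (Or.inr ⟨hfe, hf⟩)).le
  rw [kruNorm_eq]
  linarith

theorem exists_subseq_tendstoUniformlyOn_sInteg [CompactSpace Z] [Nonempty Z] {C : ℝ}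
    {μ : ℕ → SignedMeasure Z} (hμ : ∀ n, tvNorm (μ n) ≤ C) :
    ∃ (ν : SignedMeasure Z) (φ : ℕ → ℕ), StrictMono φ ∧ tvNorm ν ≤ C ∧
      ∀ s : Set (Z →ᵇ ℝ), IsCompact s →
        TendstoUniformlyOn (fun k (f : Z →ᵇ ℝ) => sInteg (μ (φ k)) f) (fun f => sInteg ν f)
          atTop s := by
  let P n : FiniteMeasure Z := ⟨(μ n).toJordanDecomposition.posPart, inferInstance⟩
  let N n : FiniteMeasure Z := ⟨(μ n).toJordanDecomposition.negPart, inferInstance⟩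
  have hmass : ∀ n, ((P n).mass : ℝ) + (N n).mass ≤ C := fun n => by
    rw [FiniteMeasure.coe_mass, FiniteMeasure.coe_mass]
    exact (tvNorm_eq (μ n)).ge.trans (hμ n)
  have hP : ∀ n, (P n).mass ≤ C.toNNReal := fun n =>
    NNReal.le_toNNReal_of_coe_le (by linarith [hmass n, (N n).mass.2])
  have hN : ∀ n, (N n).mass ≤ C.toNNReal := fun n =>
    NNReal.le_toNNReal_of_coe_le (by linarith [hmass n, (P n).mass.2])
  obtain ⟨p, φ₁, hφ₁, hp⟩ := FiniteMeasure.exists_subseq_tendsto_of_mass_le hP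
  obtain ⟨q, φ₂, hφ₂, hq⟩ := FiniteMeasure.exists_subseq_tendsto_of_mass_le fun n => hN (φ₁ n)
  replace hp : Tendsto (P ∘ φ₁ ∘ φ₂) atTop (𝓝 p) := hp.comp hφ₂.tendsto_atTop
  refine ⟨(p : Measure Z).toSignedMeasure - (q : Measure Z).toSignedMeasure, φ₁ ∘ φ₂,
    hφ₁.comp hφ₂, ?_, fun s hs => ?_⟩
  · refine (tvNorm_toSignedMeasure_sub_le _ _).trans ?_
    have hlim := (NNReal.continuous_coe.tendsto _).comp hp.mass |>.add
      ((NNReal.continuous_coe.tendsto _).comp hq.mass)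
    simpa using le_of_tendsto' hlim fun k => hmass _
  · have hlim := (FiniteMeasure.tendstoUniformlyOn_integral (fun _ => hP _) hp hs).sub
      (FiniteMeasure.tendstoUniformlyOn_integral (fun _ => hN _) hq hs)
    convert hlim using 1
    · ext k f
      conv_lhs => rw [← (μ _).toSignedMeasure_toJordanDecomposition]
      exact sInteg_toSignedMeasure_sub _ _ f
    · ext f
      exact sInteg_toSignedMeasure_sub _ _ f

/-- For a compact metric space `Z`, the unit total variation ball
`B = {μ ∈ M(Z) : ‖μ‖_TV ≤ 1}` is compact in the Kantorovich–Rubinstein norm: every sequence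
in `B` has a subsequence converging in `‖·‖_KRu` to an element of `B`. -/
theorem tv_ball_compact_in_kru [CompactSpace Z] (e : Z)
    (μ : ℕ → SignedMeasure Z) (hTV : ∀ n, tvNorm (μ n) ≤ 1) :
    ∃ (φ : ℕ → ℕ) (μlim : SignedMeasure Z), StrictMono φ ∧ tvNorm μlim ≤ 1 ∧
      Tendsto (fun k => kruNorm e (μ (φ k) - μlim)) atTop (nhds 0) := by
  have : Nonempty Z := ⟨e⟩
  obtain ⟨ν, φ, hφ, hν, hunif⟩ := exists_subseq_tendstoUniformlyOn_sInteg hTV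
  have htest : IsCompact (insert 1 (closure {f : Z →ᵇ ℝ | f e = 0 ∧ LipschitzWith 1 f})) :=
    (isCompact_closure_setOf_lipschitzWith e 1).insert 1
  exact ⟨φ, ν, hφ, hν, tendsto_kruNorm_sub_of_tendstoUniformlyOn e
    ((hunif _ htest).mono (Set.insert_subset_insert subset_closure))⟩
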